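/- There exist constants c, c' > 0 such that for every n ∈ ℕ there are regex formulas e_n and e_n' of size at most c·n such that every sequential variable-set automaton defining the natural join e_n ⋈ e_n' has at least 2^{c'·n} states. -/

import Mathlib

namespace DocSpanners

/-- A span: a pair of endpoint positions `[i, j⟩`. -/
abbrev Span : Type := ℕ × ℕ

/-- `s` is a span of document `d`. -/
def IsSpanOf {α : Type} (d : List α) (s : Span) : Prop :=
  s.1 ≤ s.2 ∧ s.2 ≤ d.length

/-- A (schemaless) mapping over variable type `V`: a partial assignment of spans. -/
abbrev Mapping (V : Type) : Type := V → Option Span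

/-- `m` is a mapping of document `d`. -/
def MappingOf {α V : Type} (d : List α) (m : Mapping V) : Prop :=
  ∀ x s, m x = some s → IsSpanOf d s

/-- A spanner: maps documents to sets of mappings. -/
abbrev Spanner (α V : Type) : Type := List α → Set (Mapping V)

/-- Labels of a variable-set automaton: letters and variable markers. -/
inductive Label (α V : Type) : Type where
  | letter (a : α)
  | vopen (x : V)
  | vclose (x : V)
deriving DecidableEq

/-- The sequence of letters of a ref-word. -/
def letters {α V : Type} (w : List (Label α V)) : List α :=
  w.filterMap fun l => match l with
    | Label.letter a => some a
    | _ => none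

/-- A ref-word is valid if for each variable, either its markers do not appear, or
the opening and closing markers appear exactly once with the opening first. -/
def ValidRef {α V : Type} [DecidableEq α] [DecidableEq V] (w : List (Label α V)) : Prop :=
  ∀ x : V,
    (Label.vopen x ∉ w ∧ Label.vclose x ∉ w) ∨
    (w.count (Label.vopen x) = 1 ∧ w.count (Label.vclose x) = 1 ∧
      w.idxOf (Label.vopen x) < w.idxOf (Label.vclose x))

/-- The mapping defined by a (valid) ref-word: each marked variable is sent to the
span delimited by the positions at which its markers are read. -/
def refMapping {α V : Type} [DecidableEq α] [DecidableEq V] (w : List (Label α V)) :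
    Mapping V := fun x =>
  if Label.vopen x ∈ w then
    some ((letters (w.take (w.idxOf (Label.vopen x)))).length,
          (letters (w.take (w.idxOf (Label.vclose x)))).length)
  else none

/-- A variable-set automaton with state type `Q`. -/
structure VA (α V Q : Type) : Type where
  init : Q
  final : Set Q
  trans : Q → Label α V → Q → Prop

/-- Paths in a VA. -/
inductive VA.Path {α V Q : Type} (A : VA α V Q) : Q → List (Label α V) → Q → Prop where
  | nil (q : Q) : VA.Path A q [] q
  | cons {q q' q'' : Q} {l : Label α V} {w : List (Label α V)} :
      A.trans q l q' → VA.Path A q' w q'' → VA.Path A q (l :: w) q''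

/-- The VA accepts the ref-word `w` (an accepting run reads `w`). -/
def VA.AcceptsRef {α V Q : Type} (A : VA α V Q) (w : List (Label α V)) : Prop :=
  ∃ qf ∈ A.final, A.Path A.init w qf

/-- A VA is sequential if every accepting run is valid. -/
def VA.Sequential {α V Q : Type} [DecidableEq α] [DecidableEq V] (A : VA α V Q) : Prop :=
  ∀ w, A.AcceptsRef w → ValidRef w

/-- The spanner defined by a (sequential) VA. -/
def VA.spanner {α V Q : Type} [DecidableEq α] [DecidableEq V] (A : VA α V Q) :
    Spanner α V := fun d =>
  {m | ∃ w, A.AcceptsRef w ∧ letters w = d ∧ refMapping w = m}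

/-- A spanner is regular if it is defined by some sequential VA with finitely many states. -/
def IsRegular {α V : Type} [DecidableEq α] [DecidableEq V] (P : Spanner α V) : Prop :=
  ∃ (Q : Type) (_ : Fintype Q) (A : VA α V Q), A.Sequential ∧ A.spanner = P

/-- The skyline operator: keep only the mappings of `P d` that are maximal under `R d`. -/
def skyline {α V : Type} (P : Spanner α V)
    (R : List α → Mapping V → Mapping V → Prop) : Spanner α V := fun d =>
  {m | m ∈ P d ∧ ∀ m' ∈ P d, m' ≠ m → ¬ R d m m'}

/-- The variable inclusion domination relation: `m2` extends `m1`. -/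
def varIncRel {V : Type} (m1 m2 : Mapping V) : Prop :=
  ∀ x s, m1 x = some s → m2 x = some s

/-- Two mappings have the same domain. -/
def sameDom {V : Type} (m1 m2 : Mapping V) : Prop :=
  ∀ x, m1 x = none ↔ m2 x = none

/-- The span inclusion domination relation. -/
def spanIncRel {V : Type} (m1 m2 : Mapping V) : Prop :=
  sameDom m1 m2 ∧
    ∀ x s1 s2, m1 x = some s1 → m2 x = some s2 → s2.1 ≤ s1.1 ∧ s1.2 ≤ s2.2

/-- The left-to-right domination relation: same start, `m2` no shorter. -/
def ltrRel {V : Type} (m1 m2 : Mapping V) : Prop :=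
  sameDom m1 m2 ∧
    ∀ x s1 s2, m1 x = some s1 → m2 x = some s2 →
      s1.1 = s2.1 ∧ s1.2 - s1.1 ≤ s2.2 - s2.1

/-- The span length domination relation: `m2`'s spans are no shorter. -/
def spanLenRel {V : Type} (m1 m2 : Mapping V) : Prop :=
  sameDom m1 m2 ∧
    ∀ x s1 s2, m1 x = some s1 → m2 x = some s2 → s1.2 - s1.1 ≤ s2.2 - s2.1


/-- Regex formulas with variable captures. -/
inductive Regex (α V : Type) : Type where
  | empty
  | eps
  | char (a : α)
  | disj (e1 e2 : Regex α V)
  | concat (e1 e2 : Regex α V)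
  | star (e : Regex α V)
  | cap (x : V) (e : Regex α V)

/-- The size of a regex formula. -/
def Regex.size {α V : Type} : Regex α V → ℕ
  | .empty => 1
  | .eps => 1
  | .char _ => 1
  | .disj e1 e2 => e1.size + e2.size + 1
  | .concat e1 e2 => e1.size + e2.size + 1
  | .star e => e.size + 1
  | .cap _ e => e.size + 1

/-- The ref-word language of a regex formula. -/
def Regex.refLang {α V : Type} : Regex α V → Language (Label α V)
  | .empty => 0
  | .eps => 1
  | .char a => {[Label.letter a]}
  | .disj e1 e2 => e1.refLang + e2.refLang
  | .concat e1 e2 => e1.refLang * e2.refLang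
  | .star e => KStar.kstar e.refLang
  | .cap x e => {w | ∃ u ∈ e.refLang, w = Label.vopen x :: (u ++ [Label.vclose x])}

/-- The spanner defined by a regex formula. -/
def Regex.spanner {α V : Type} [DecidableEq α] [DecidableEq V] (e : Regex α V) :
    Spanner α V := fun d =>
  {m | ∃ w ∈ e.refLang, ValidRef w ∧ letters w = d ∧ refMapping w = m}

/-- Two mappings are compatible if they agree on their common domain. -/
def Compatible {V : Type} (m1 m2 : Mapping V) : Prop :=
  ∀ x s1 s2, m1 x = some s1 → m2 x = some s2 → s1 = s2

/-- The natural join of two spanners. -/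
def joinSpanner {α V : Type} (P1 P2 : Spanner α V) : Spanner α V := fun d =>
  {m | ∃ m1 ∈ P1 d, ∃ m2 ∈ P2 d, Compatible m1 m ∧ Compatible m2 m ∧
        ∀ x, m x ≠ none ↔ (m1 x ≠ none ∨ m2 x ≠ none)}

/-!
On the document `a²ⁿ⁺¹`, for every `S ⊆ {0, …, n-1}` the join `e_n ⋈ e'_n` contains the mapping
that captures `xᵢ` at `[i, i+1⟩` for `i ∈ S` and at `[n+1+i, n+2+i⟩` for `i ∉ S`. Cut an
accepting run producing it right after the `(n+1)`-st letter: every `⊢xᵢ` with `i ∈ S` lies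
before the cut and every other one after it. If two sets `S ≠ T` reached the same state at the
cut, gluing the first half of the run for `S` to the second half of the run for `T` would give
an accepting run opening some `xᵢ` twice, which a sequential automaton cannot have. So the `2ⁿ`
cut states are distinct.
-/

section RefWords

variable {α V : Type}

@[simp] lemma letters_nil : letters ([] : List (Label α V)) = [] := rfl

@[simp] lemma letters_append (u v : List (Label α V)) :
    letters (u ++ v) = letters u ++ letters v :=
  List.filterMap_append

@[simp] lemma letters_cons_letter (a : α) (w : List (Label α V)) :
    letters (Label.letter a :: w) = a :: letters w := rfl

@[simp] lemma letters_cons_vopen (x : V) (w : List (Label α V)) :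
    letters (Label.vopen x :: w) = letters w := rfl

@[simp] lemma letters_cons_vclose (x : V) (w : List (Label α V)) :
    letters (Label.vclose x :: w) = letters w := rfl

@[simp] lemma letters_replicate_letter (a : α) (p : ℕ) :
    letters (List.replicate p (Label.letter a : Label α V)) = List.replicate p a := by
  induction p with
  | zero => rfl
  | succ p ih => simp [List.replicate_succ, ih]

lemma length_letters_take_le (w : List (Label α V)) (k : ℕ) :
    (letters (w.take k)).length ≤ (letters w).length :=
  ((List.take_sublist k w).filterMap _).length_le

lemma exists_eq_append_letter_cons {w : List (Label α V)} {n : ℕ}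
    (h : n < (letters w).length) :
    ∃ u a v, w = u ++ Label.letter a :: v ∧ (letters u).length = n := by
  induction w generalizing n with
  | nil => simp at h
  | cons l w ih =>
    cases l with
    | letter a =>
      cases n with
      | zero => exact ⟨[], a, w, rfl, rfl⟩
      | succ n =>
        obtain ⟨u, b, v, rfl, hu⟩ := ih (by simpa using h)
        exact ⟨Label.letter a :: u, b, v, rfl, by simpa using hu⟩
    | vopen x =>
      obtain ⟨u, b, v, rfl, hu⟩ := ih (by simpa using h)
      exact ⟨Label.vopen x :: u, b, v, rfl, by simpa using hu⟩
    | vclose x =>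
      obtain ⟨u, b, v, rfl, hu⟩ := ih (by simpa using h)
      exact ⟨Label.vclose x :: u, b, v, rfl, by simpa using hu⟩

variable [DecidableEq α] [DecidableEq V] {u v w : List (Label α V)} {x : V} {s : Span}

lemma refMapping_eq_none_iff : refMapping w x = none ↔ Label.vopen x ∉ w := by
  unfold refMapping
  split_ifs <;> simp_all

lemma vopen_mem_of_refMapping_eq_some (h : refMapping w x = some s) : Label.vopen x ∈ w := by
  by_contra hx
  rw [← refMapping_eq_none_iff] at hx
  simp_all

lemma refMapping_append_fst_le (h : refMapping (u ++ v) x = some s)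
    (hx : Label.vopen x ∈ u) : s.1 ≤ (letters u).length := by
  rw [refMapping, if_pos (List.mem_append_left v hx), Option.some_inj] at h
  rw [← h, List.idxOf_append_of_mem hx, List.take_append_of_le_length List.idxOf_le_length]
  exact length_letters_take_le u _

lemma length_letters_le_refMapping_append_fst (h : refMapping (u ++ v) x = some s)
    (hx : Label.vopen x ∉ u) : (letters u).length ≤ s.1 := by
  rw [refMapping, if_pos (vopen_mem_of_refMapping_eq_some h), Option.some_inj] at h
  rw [← h, List.idxOf_append_of_notMem hx, List.take_length_add_append]
  simp

lemma vopen_mem_of_refMapping_fst_le {a : α}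
    (h : refMapping (u ++ Label.letter a :: v) x = some s) (hs : s.1 ≤ (letters u).length) :
    Label.vopen x ∈ u ++ [Label.letter a] := by
  by_contra hx
  have := length_letters_le_refMapping_append_fst (u := u ++ [Label.letter a])
    (by simpa using h) hx
  simp only [letters_append, letters_cons_letter, letters_nil, List.length_append,
    List.length_singleton] at this
  omega

lemma vopen_mem_of_lt_refMapping_fst {a : α}
    (h : refMapping (u ++ Label.letter a :: v) x = some s) (hs : (letters u).length < s.1) :
    Label.vopen x ∈ v := by
  have hw := vopen_mem_of_refMapping_eq_some h
  have hu : Label.vopen x ∉ u := fun hx => by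
    have := refMapping_append_fst_le h hx
    omega
  simpa [hu] using hw

lemma ValidRef.count_vopen_le_one (hw : ValidRef w) (x : V) : w.count (Label.vopen x) ≤ 1 := by
  rcases hw x with ⟨hx, -⟩ | ⟨hx, -⟩
  · simp [List.count_eq_zero_of_not_mem hx]
  · exact hx.le

lemma not_validRef_append_of_vopen_mem (hu : Label.vopen x ∈ u) (hv : Label.vopen x ∈ v) :
    ¬ ValidRef (u ++ v) := fun h => by
  have := h.count_vopen_le_one x
  rw [List.count_append] at this
  have := List.count_pos_iff.2 hu
  have := List.count_pos_iff.2 hv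
  omega

lemma ValidRef.append (hu : ValidRef u) (hv : ValidRef v)
    (h : ∀ x, (Label.vopen x ∉ u ∧ Label.vclose x ∉ u) ∨
      (Label.vopen x ∉ v ∧ Label.vclose x ∉ v)) :
    ValidRef (u ++ v) := by
  intro x
  rcases h x with ⟨ho, hc⟩ | ⟨ho, hc⟩
  · rcases hv x with ⟨ho', hc'⟩ | ⟨h1, h2, h3⟩
    · simp [ho, hc, ho', hc']
    · right
      simp only [List.count_append, List.count_eq_zero_of_not_mem ho,
        List.count_eq_zero_of_not_mem hc, List.idxOf_append_of_notMem ho,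
        List.idxOf_append_of_notMem hc]
      omega
  · rcases hu x with ⟨ho', hc'⟩ | ⟨h1, h2, h3⟩
    · simp [ho, hc, ho', hc']
    · right
      simp only [List.count_append, List.count_eq_zero_of_not_mem ho,
        List.count_eq_zero_of_not_mem hc,
        List.idxOf_append_of_mem (List.count_pos_iff.1 (h1 ▸ Nat.one_pos)),
        List.idxOf_append_of_mem (List.count_pos_iff.1 (h2 ▸ Nat.one_pos))]
      omega

end RefWords

namespace VA

variable {α V Q : Type} {A : VA α V Q}

lemma Path.append {q q' q'' : Q} {u v : List (Label α V)}
    (h₁ : A.Path q u q') (h₂ : A.Path q' v q'') : A.Path q (u ++ v) q'' := by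
  induction h₁ with
  | nil => exact h₂
  | cons ht _ ih => exact .cons ht (ih h₂)

lemma Path.exists_of_append {q q'' : Q} {u v : List (Label α V)}
    (h : A.Path q (u ++ v) q'') : ∃ q', A.Path q u q' ∧ A.Path q' v q'' := by
  induction u generalizing q with
  | nil => exact ⟨q, .nil q, h⟩
  | cons l u ih =>
    cases h with
    | cons ht hp =>
      obtain ⟨q', h₁, h₂⟩ := ih hp
      exact ⟨q', .cons ht h₁, h₂⟩

lemma card_le_of_fooling [DecidableEq α] [DecidableEq V] {ι : Type} [Fintype ι] [Fintype Q]
    (hA : A.Sequential) (u v : ι → List (Label α V)) (hacc : ∀ i, A.AcceptsRef (u i ++ v i))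
    (hfool : ∀ i j, ValidRef (u i ++ v j) → ValidRef (u j ++ v i) → i = j) :
    Fintype.card ι ≤ Fintype.card Q := by
  have hmid (i : ι) : ∃ q, A.Path A.init (u i) q ∧ ∃ qf ∈ A.final, A.Path q (v i) qf := by
    obtain ⟨qf, hqf, hp⟩ := hacc i
    obtain ⟨q, h₁, h₂⟩ := hp.exists_of_append
    exact ⟨q, h₁, qf, hqf, h₂⟩
  choose f hinit hfinal using hmid
  refine Fintype.card_le_of_injective f fun i j hij => hfool i j (hA _ ?_) (hA _ ?_)
  · obtain ⟨qf, hqf, hp⟩ := hfinal j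
    exact ⟨qf, hqf, (hinit i).append (hij ▸ hp)⟩
  · obtain ⟨qf, hqf, hp⟩ := hfinal i
    exact ⟨qf, hqf, (hinit j).append (hij ▸ hp)⟩

end VA

lemma mem_joinSpanner_of_disjoint {α V : Type} {P₁ P₂ : Spanner α V} {d : List α}
    {m₁ m₂ : Mapping V} (h₁ : m₁ ∈ P₁ d) (h₂ : m₂ ∈ P₂ d) (h : ∀ x, m₁ x = none ∨ m₂ x = none) :
    (fun x => (m₁ x).or (m₂ x)) ∈ joinSpanner P₁ P₂ d := by
  refine ⟨m₁, h₁, m₂, h₂, fun x s₁ s₂ hs₁ hs₂ => ?_, fun x s₁ s₂ hs₁ hs₂ => ?_, fun x => ?_⟩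
  · simp_all
  · rcases h x with hx | hx <;> simp_all
  · rcases h x with hx | hx <;> simp [hx]

section Construction

def slotRegex (k : ℕ) : Regex Unit ℕ := .disj (.cap k (.char ())) (.char ())

def slotsRegex : ℕ → Regex Unit ℕ
  | 0 => .eps
  | k + 1 => .concat (slotsRegex k) (slotRegex k)

def padRegex : ℕ → Regex Unit ℕ
  | 0 => .eps
  | p + 1 => .concat (.char ()) (padRegex p)

/-- The paper's `e_n = (x₀{a} ∨ a) ⋯ (xₙ₋₁{a} ∨ a) · aⁿ⁺¹`; `rightRegex n` is its mirror image
`e'_n = aⁿ⁺¹ · (x₀{a} ∨ a) ⋯ (xₙ₋₁{a} ∨ a)`. -/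
def leftRegex (n : ℕ) : Regex Unit ℕ := .concat (slotsRegex n) (padRegex (n + 1))

def rightRegex (n : ℕ) : Regex Unit ℕ := .concat (padRegex (n + 1)) (slotsRegex n)

lemma size_slotsRegex (k : ℕ) : (slotsRegex k).size = 5 * k + 1 := by
  induction k with
  | zero => rfl
  | succ k ih => simp only [slotsRegex, slotRegex, Regex.size, ih]; ring

lemma size_padRegex (p : ℕ) : (padRegex p).size = 2 * p + 1 := by
  induction p with
  | zero => rfl
  | succ p ih => simp only [padRegex, Regex.size, ih]; ring

lemma size_leftRegex (n : ℕ) : (leftRegex n).size = 7 * n + 5 := by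
  simp only [leftRegex, Regex.size, size_slotsRegex, size_padRegex]; ring

lemma size_rightRegex (n : ℕ) : (rightRegex n).size = 7 * n + 5 := by
  simp only [rightRegex, Regex.size, size_slotsRegex, size_padRegex]; ring

lemma mem_refLang_padRegex {w : List (Label Unit ℕ)} {p : ℕ} :
    w ∈ (padRegex p).refLang ↔ w = List.replicate p (Label.letter ()) := by
  induction p generalizing w with
  | zero => simp [padRegex, Regex.refLang, Language.mem_one]
  | succ p ih =>
    simp only [padRegex, Regex.refLang, Language.mem_mul, ih, List.replicate_succ]
    constructor
    · rintro ⟨_, rfl, _, rfl, rfl⟩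
      rfl
    · rintro rfl
      exact ⟨_, rfl, _, rfl, rfl⟩

lemma validRef_of_mem_slotsRegex {w : List (Label Unit ℕ)} {k : ℕ}
    (hw : w ∈ (slotsRegex k).refLang) :
    ValidRef w ∧ ∀ x, Label.vopen x ∈ w ∨ Label.vclose x ∈ w → x < k := by
  induction k generalizing w with
  | zero =>
    obtain rfl : w = [] := by simpa [slotsRegex, Regex.refLang, Language.mem_one] using hw
    simp [ValidRef]
  | succ k ih =>
    obtain ⟨u, hu, v, hv, rfl⟩ := Language.mem_mul.1 hw
    obtain ⟨hvalid, hvars⟩ := ih hu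
    have hv' : v = [Label.vopen k, Label.letter (), Label.vclose k] ∨ v = [Label.letter ()] := by
      rw [slotRegex, Regex.refLang, Language.mem_add] at hv
      rcases hv with ⟨_, rfl, rfl⟩ | rfl
      exacts [.inl rfl, .inr rfl]
    refine ⟨hvalid.append ?_ fun x => ?_, fun x hx => ?_⟩
    · rcases hv' with rfl | rfl <;> intro x <;> by_cases hx : x = k <;> simp [hx]
    · by_cases hx : x = k
      · subst hx
        exact .inl ⟨fun h => (hvars x (.inl h)).false, fun h => (hvars x (.inr h)).false⟩
      · rcases hv' with rfl | rfl <;> simp [hx]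
    · rcases hv' with rfl | rfl <;> grind

lemma exists_mem_refLang_slotsRegex (p : ℕ → Prop) (k : ℕ) :
    ∃ w ∈ (slotsRegex k).refLang, letters w = List.replicate k () ∧
      ∀ x, Label.vopen x ∈ w ↔ x < k ∧ p x := by
  classical
  induction k with
  | zero => exact ⟨[], rfl, rfl, by simp⟩
  | succ k ih =>
    obtain ⟨u, hu, hlet, hvars⟩ := ih
    let v : List (Label Unit ℕ) :=
      if p k then [Label.vopen k, Label.letter (), Label.vclose k] else [Label.letter ()]
    have hv : v ∈ (slotRegex k).refLang := by
      rw [slotRegex, Regex.refLang, Language.mem_add]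
      by_cases hk : p k
      · exact .inl ⟨[Label.letter ()], rfl, by simp [v, hk]⟩
      · exact .inr (by simp [v, hk]; rfl)
    refine ⟨u ++ v, Language.mem_mul.2 ⟨u, hu, v, hv, rfl⟩, ?_, fun x => ?_⟩
    · by_cases hk : p k <;> simp [v, hk, hlet, List.replicate_succ']
    · by_cases hk : p k <;> by_cases hx : x = k <;> simp [v, hk, hx, hvars] <;> omega

lemma validRef_of_mem_refLang_leftRegex (n : ℕ) : ∀ w ∈ (leftRegex n).refLang, ValidRef w := by
  intro w hw
  obtain ⟨u, hu, v, hv, rfl⟩ := Language.mem_mul.1 hw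
  rw [mem_refLang_padRegex] at hv
  subst hv
  exact (validRef_of_mem_slotsRegex hu).1.append (fun x => by simp) (fun x => by simp)

lemma validRef_of_mem_refLang_rightRegex (n : ℕ) : ∀ w ∈ (rightRegex n).refLang, ValidRef w := by
  intro w hw
  obtain ⟨u, hu, v, hv, rfl⟩ := Language.mem_mul.1 hw
  rw [mem_refLang_padRegex] at hu
  subst hu
  exact ValidRef.append (fun x => by simp) (validRef_of_mem_slotsRegex hv).1 (fun x => by simp)

lemma exists_mem_spanner_leftRegex (p : ℕ → Prop) (n : ℕ) :
    ∃ m ∈ (leftRegex n).spanner (List.replicate (2 * n + 1) ()),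
      ∀ x, (m x = none ↔ ¬ (x < n ∧ p x)) ∧ ∀ s, m x = some s → s.1 ≤ n := by
  obtain ⟨w, hw, hlet, hvars⟩ := exists_mem_refLang_slotsRegex p n
  have hmem : w ++ List.replicate (n + 1) (Label.letter ()) ∈ (leftRegex n).refLang :=
    Language.mem_mul.2 ⟨w, hw, _, mem_refLang_padRegex.2 rfl, rfl⟩
  refine ⟨_, ⟨_, hmem, validRef_of_mem_refLang_leftRegex n _ hmem, ?_, rfl⟩, fun x => ⟨?_, ?_⟩⟩
  · rw [letters_append, hlet, letters_replicate_letter, List.replicate_append_replicate]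
    congr 1
    omega
  · simp [refMapping_eq_none_iff, hvars]
  · intro s hs
    have := refMapping_append_fst_le hs (by simpa using vopen_mem_of_refMapping_eq_some hs)
    simpa [hlet] using this

lemma exists_mem_spanner_rightRegex (p : ℕ → Prop) (n : ℕ) :
    ∃ m ∈ (rightRegex n).spanner (List.replicate (2 * n + 1) ()),
      ∀ x, (m x = none ↔ ¬ (x < n ∧ p x)) ∧ ∀ s, m x = some s → n + 1 ≤ s.1 := by
  obtain ⟨w, hw, hlet, hvars⟩ := exists_mem_refLang_slotsRegex p n
  have hmem : List.replicate (n + 1) (Label.letter ()) ++ w ∈ (rightRegex n).refLang :=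
    Language.mem_mul.2 ⟨_, mem_refLang_padRegex.2 rfl, w, hw, rfl⟩
  refine ⟨_, ⟨_, hmem, validRef_of_mem_refLang_rightRegex n _ hmem, ?_, rfl⟩, fun x => ⟨?_, ?_⟩⟩
  · rw [letters_append, hlet, letters_replicate_letter, List.replicate_append_replicate]
    congr 1
    omega
  · simp [refMapping_eq_none_iff, hvars]
  · intro s hs
    simpa using length_letters_le_refMapping_append_fst hs (by simp)

lemma exists_mem_joinSpanner (p : ℕ → Prop) (n : ℕ) :
    ∃ m ∈ joinSpanner (leftRegex n).spanner (rightRegex n).spanner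
        (List.replicate (2 * n + 1) ()),
      ∀ x < n, ∃ s, m x = some s ∧ (p x → s.1 ≤ n) ∧ (¬ p x → n + 1 ≤ s.1) := by
  obtain ⟨m₁, h₁, hm₁⟩ := exists_mem_spanner_leftRegex p n
  obtain ⟨m₂, h₂, hm₂⟩ := exists_mem_spanner_rightRegex (fun x => ¬ p x) n
  refine ⟨_, mem_joinSpanner_of_disjoint h₁ h₂ fun x => ?_, fun x hx => ?_⟩
  · by_cases hp : p x
    · exact .inr ((hm₂ x).1.2 fun h => h.2 hp)
    · exact .inl ((hm₁ x).1.2 fun h => hp h.2)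
  · by_cases hp : p x
    · obtain ⟨s, hs⟩ := Option.ne_none_iff_exists'.1 fun h => (hm₁ x).1.1 h ⟨hx, hp⟩
      exact ⟨s, by simp [hs], fun _ => (hm₁ x).2 s hs, fun h => absurd hp h⟩
    · obtain ⟨s, hs⟩ := Option.ne_none_iff_exists'.1 fun h => (hm₂ x).1.1 h ⟨hx, hp⟩
      have h₁x : m₁ x = none := (hm₁ x).1.2 fun h => hp h.2
      exact ⟨s, by simp [h₁x, hs], fun h => absurd h hp, fun _ => (hm₂ x).2 s hs⟩

end Construction

section StateBound

variable {Q : Type} {A : VA Unit ℕ Q} {n : ℕ}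

lemma exists_accepting_split_of_spanner_eq_join
    (hA : A.spanner = joinSpanner (leftRegex n).spanner (rightRegex n).spanner)
    (p : ℕ → Prop) :
    ∃ u v, A.AcceptsRef (u ++ v) ∧
      ∀ x < n, (p x → Label.vopen x ∈ u) ∧ (¬ p x → Label.vopen x ∈ v) := by
  obtain ⟨m, hm, hspans⟩ := exists_mem_joinSpanner p n
  rw [← hA] at hm
  obtain ⟨w, hacc, hlet, rfl⟩ := hm
  obtain ⟨u, a, v, rfl, hu⟩ :=
    exists_eq_append_letter_cons (w := w) (n := n) (by rw [hlet, List.length_replicate]; omega)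
  refine ⟨u ++ [Label.letter a], v, by simpa using hacc, fun x hx => ?_⟩
  obtain ⟨s, hs, hleft, hright⟩ := hspans x hx
  exact ⟨fun h => vopen_mem_of_refMapping_fst_le hs (hu ▸ hleft h),
    fun h => vopen_mem_of_lt_refMapping_fst hs (by have := hright h; omega)⟩

lemma two_pow_le_card_of_spanner_eq_join [Fintype Q] (hseq : A.Sequential)
    (hA : A.spanner = joinSpanner (leftRegex n).spanner (rightRegex n).spanner) :
    2 ^ n ≤ Fintype.card Q := by
  choose u v hacc hsplit using fun S : Finset (Fin n) =>
    exists_accepting_split_of_spanner_eq_join hA fun x => ∃ h : x < n, ⟨x, h⟩ ∈ S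
  have hfool (S T : Finset (Fin n)) (hST : ValidRef (u S ++ v T)) : S ⊆ T := fun i hi => by
    by_contra hiT
    exact not_validRef_append_of_vopen_mem ((hsplit S i i.isLt).1 ⟨i.isLt, hi⟩)
      ((hsplit T i i.isLt).2 fun ⟨_, h⟩ => hiT h) hST
  calc 2 ^ n = Fintype.card (Finset (Fin n)) := by simp
    _ ≤ Fintype.card Q := VA.card_le_of_fooling hseq u v hacc fun S T hST hTS =>
      (hfool S T hST).antisymm (hfool T S hTS)

end StateBound

/-- There are constants `c, c' > 0` such that for every (large enough)
`n` there are regex formulas `e, e'` of size at most `c·n` (each assigning every variable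
at most once on every document) such that every sequential VA defining `e ⋈ e'` has at
least `2^(c'·n)` states. -/
theorem join_of_regex_state_blowup :
    ∃ c : ℕ, 0 < c ∧ ∃ c' : ℝ, 0 < c' ∧ ∃ N : ℕ, ∀ n : ℕ, N ≤ n →
      ∃ e e' : Regex Unit ℕ,
        (∀ w ∈ e.refLang, ValidRef w) ∧ (∀ w ∈ e'.refLang, ValidRef w) ∧
        e.size ≤ c * n ∧ e'.size ≤ c * n ∧
        ∀ (Q : Type) (_ : Fintype Q) (A : VA Unit ℕ Q),
          A.Sequential → A.spanner = joinSpanner e.spanner e'.spanner →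
          (2 : ℝ) ^ (c' * (n : ℝ)) ≤ (Fintype.card Q : ℝ) := by
  refine ⟨12, by norm_num, 1, one_pos, 1, fun n hn => ⟨leftRegex n, rightRegex n,
    validRef_of_mem_refLang_leftRegex n, validRef_of_mem_refLang_rightRegex n,
    by rw [size_leftRegex]; omega, by rw [size_rightRegex]; omega,
    fun Q _ A hseq hA => ?_⟩⟩
  rw [one_mul, Real.rpow_natCast]
  exact_mod_cast two_pow_le_card_of_spanner_eq_join hseq hA

end DocSpanners
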